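/- Single-pointed arrow update models are strictly more update expressive than single-pointed action models: let U be the arrow update model with a single outcome o and a single arrow (o,p)→_a(o,⊤). Then there is no single-pointed action model (E,e) such that for every pointed relational model (M,s), (M*U,(s,o)) is bisimilar to (M⊗E,(s,e)). -/

import Mathlib

/-!
In `M*U` the point `(s,0)` has an `a`-successor exactly when `p` holds at `s` and `s` has an
`a`-successor, whereas in `M ⊗ E` the successors of `(s,e)` do not depend on the valuation at
`s` itself. Take the two-world model in which every world sees `true` and `p` holds only at
`true`. At `true` the bisimulation forces an action `e'` with `e →_a e'` executable at `true`;
at `false` the same `e'` gives an `a`-successor of `(false,e)` in `M ⊗ E`, while `(false,0)`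
has none in `M*U`.
-/

namespace AAUML

/-- Formulas of arbitrary arrow update model logic over atoms `P` and agents `A`.
An arrow update model is encoded as a finite list of arrows
`(agent, source outcome, source condition, target outcome, target condition)`,
with outcomes drawn from `ℕ`; `upd U o φ` is `[U,o]φ` and `all φ` is `[↑]φ`. -/
inductive Form (P A : Type) : Type where
  | atom : P → Form P A
  | neg  : Form P A → Form P A
  | and  : Form P A → Form P A → Form P A
  | box  : A → Form P A → Form P A
  | upd  : List (A × ℕ × Form P A × ℕ × Form P A) → ℕ → Form P A → Form P A
  | all  : Form P A → Form P A

/-- An arrow: agent, source outcome, source condition, target outcome, target condition. -/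
abbrev Arrow (P A : Type) := A × ℕ × Form P A × ℕ × Form P A

/-- Formulas of basic multi-agent modal logic: no update modality, no quantifier. -/
inductive Form.Modal {P A : Type} : Form P A → Prop
  | atom (p : P) : Form.Modal (.atom p)
  | neg {φ : Form P A} : Form.Modal φ → Form.Modal (.neg φ)
  | and {φ ψ : Form P A} : Form.Modal φ → Form.Modal ψ → Form.Modal (.and φ ψ)
  | box (a : A) {φ : Form P A} : Form.Modal φ → Form.Modal (.box a φ)

/-- Formulas of arrow update model logic (no arbitrary-update quantifier anywhere,
including inside the conditions of arrow update models). -/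
inductive Form.NoQuant {P A : Type} : Form P A → Prop
  | atom (p : P) : Form.NoQuant (.atom p)
  | neg {φ : Form P A} : Form.NoQuant φ → Form.NoQuant (.neg φ)
  | and {φ ψ : Form P A} : Form.NoQuant φ → Form.NoQuant ψ → Form.NoQuant (.and φ ψ)
  | box (a : A) {φ : Form P A} : Form.NoQuant φ → Form.NoQuant (.box a φ)
  | upd {U : List (Arrow P A)} (o : ℕ) {φ : Form P A} : Form.NoQuant φ →
      (∀ ar ∈ U, Form.NoQuant ar.2.2.1) → (∀ ar ∈ U, Form.NoQuant ar.2.2.2.2) →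
      Form.NoQuant (.upd U o φ)

/-- Propositional formulas (no modalities at all). -/
inductive Form.Prp {P A : Type} : Form P A → Prop
  | atom (p : P) : Form.Prp (.atom p)
  | neg {φ : Form P A} : Form.Prp φ → Form.Prp (.neg φ)
  | and {φ ψ : Form P A} : Form.Prp φ → Form.Prp ψ → Form.Prp (.and φ ψ)

/-- A relational (Kripke) model. -/
structure KModel (P A : Type) : Type 1 where
  World : Type
  R : A → World → World → Prop
  V : World → P → Prop

variable {P A : Type}

/-- Satisfaction for basic modal formulas (junk value `False` on updates/quantifiers;
only used on modal formulas). -/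
def msat (M : KModel P A) : M.World → Form P A → Prop
  | s, .atom p => M.V s p
  | s, .neg φ => ¬ msat M s φ
  | s, .and φ ψ => msat M s φ ∧ msat M s ψ
  | s, .box a φ => ∀ t, M.R a s t → msat M t φ
  | _, .upd _ _ _ => False
  | _, .all _ => False

/-- Some arrow of `U` for agent `a` from outcome `o` to outcome `o'` has its (modal)
source condition true at `s` and its target condition true at `s'`. -/
def marrowOK (M : KModel P A) (U : List (Arrow P A)) (a : A) (o o' : ℕ)
    (s s' : M.World) : Prop :=
  ∃ ψ ψ', (a, o, ψ, o', ψ') ∈ U ∧ msat M s ψ ∧ msat M s' ψ'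

/-- All source and target conditions of `U` are basic modal formulas. -/
def ModalArrows (U : List (Arrow P A)) : Prop :=
  ∀ ar ∈ U, Form.Modal ar.2.2.1 ∧ Form.Modal ar.2.2.2.2

mutual
  /-- Satisfaction `M,s ⊨ φ`.  The case `upd U o φ` is interpreted in the product
  model `M*U` (inlined); `all φ` quantifies over all arrow update models with basic
  modal source and target conditions. -/
  def Form.sat : (M : KModel P A) → M.World → Form P A → Prop
    | M, s, .atom p => M.V s p
    | M, s, .neg φ => ¬ Form.sat M s φ
    | M, s, .and φ ψ => Form.sat M s φ ∧ Form.sat M s ψ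
    | M, s, .box a φ => ∀ t, M.R a s t → Form.sat M t φ
    | M, s, .upd U o φ =>
        Form.sat ⟨M.World × ℕ,
          fun a x y => M.R a x.1 y.1 ∧ satList M U a x.2 y.2 x.1 y.1,
          fun x p => M.V x.1 p⟩ (s, o) φ
    | M, s, .all φ => ∀ (U : List (Arrow P A)) (o : ℕ), ModalArrows U →
        Form.sat ⟨M.World × ℕ,
          fun a x y => M.R a x.1 y.1 ∧ marrowOK M U a x.2 y.2 x.1 y.1,
          fun x p => M.V x.1 p⟩ (s, o) φ
  termination_by M s φ => sizeOf φ

  /-- Some arrow of the list, for agent `a`, from `o` to `o'`, has its source condition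
  true at `s` and its target condition true at `s'`. -/
  def satList : (M : KModel P A) → List (Arrow P A) → A → ℕ → ℕ → M.World → M.World → Prop
    | _, [], _, _, _, _, _ => False
    | M, (b, o1, ψ, o2, ψ') :: rest, a, o, o', s, s' =>
        (b = a ∧ o1 = o ∧ o2 = o' ∧ Form.sat M s ψ ∧ Form.sat M s' ψ') ∨
        satList M rest a o o' s s'
  termination_by M U a o o' s s' => sizeOf U
end

/-- The product `M*U` of a relational model and an arrow update model. -/
def prodModel (M : KModel P A) (U : List (Arrow P A)) : KModel P A :=
  ⟨M.World × ℕ,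
   fun a x y => M.R a x.1 y.1 ∧ satList M U a x.2 y.2 x.1 y.1,
   fun x p => M.V x.1 p⟩

def Valid (φ : Form P A) : Prop := ∀ (M : KModel P A) (s : M.World), Form.sat M s φ

def Form.or (φ ψ : Form P A) : Form P A := .neg (.and (.neg φ) (.neg ψ))
def Form.imp (φ ψ : Form P A) : Form P A := .neg (.and φ (.neg ψ))
def Form.dia (a : A) (φ : Form P A) : Form P A := .neg (.box a (.neg φ))
/-- `⟨U,o⟩φ` -/
def Form.diaUpd (U : List (Arrow P A)) (o : ℕ) (φ : Form P A) : Form P A :=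
  .neg (.upd U o (.neg φ))
/-- `⟨↑⟩φ` -/
def Form.ex (φ : Form P A) : Form P A := .neg (.all (.neg φ))
/-- A canonical tautology. -/
def Form.top [Inhabited P] : Form P A := .neg (.and (.atom default) (.neg (.atom default)))
/-- Finite conjunction. -/
def Form.conj [Inhabited P] : List (Form P A) → Form P A
  | [] => Form.top
  | φ :: rest => .and φ (Form.conj rest)

/-- `Z` is a bisimulation between `M` and `N`. -/
def IsBisim (M N : KModel P A) (Z : M.World → N.World → Prop) : Prop :=
  ∀ s s', Z s s' →
    (∀ p, M.V s p ↔ N.V s' p) ∧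
    (∀ a t, M.R a s t → ∃ t', N.R a s' t' ∧ Z t t') ∧
    (∀ a t', N.R a s' t' → ∃ t, M.R a s t ∧ Z t t')

/-- Bisimilarity of pointed models. -/
def Bisimilar (M : KModel P A) (s : M.World) (N : KModel P A) (s' : N.World) : Prop :=
  ∃ Z, IsBisim M N Z ∧ Z s s'

/-- An action model: actions with accessibility relations and preconditions. -/
structure AModel (P A : Type) : Type 1 where
  Action : Type
  rel : A → Action → Action → Prop
  pre : Action → Form P A

/-- The restricted modal product `M ⊗ E`. -/
def actProd (M : KModel P A) (E : AModel P A) : KModel P A :=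
  ⟨{x : M.World × E.Action // Form.sat M x.1 (E.pre x.2)},
   fun a x y => M.R a x.1.1 y.1.1 ∧ E.rel a x.1.2 y.1.2,
   fun x p => M.V x.1.1 p⟩

/-- `M,s ⊨ [E,e]φ`: if the precondition of `e` holds at `s` then `φ` holds at `(s,e)`
in `M ⊗ E`. -/
def actSat (M : KModel P A) (E : AModel P A) (s : M.World) (e : E.Action)
    (φ : Form P A) : Prop :=
  ∀ h : Form.sat M s (E.pre e), Form.sat (actProd M E) ⟨(s, e), h⟩ φ

theorem sat_neg_and_neg_self (M : KModel P A) (s : M.World) (φ : Form P A) :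
    Form.sat M s (.neg (.and φ (.neg φ))) := by
  simp only [Form.sat]
  tauto

theorem satList_singleton (M : KModel P A) (b a : A) (o₁ o₂ o o' : ℕ) (ψ ψ' : Form P A)
    (s s' : M.World) :
    satList M [(b, o₁, ψ, o₂, ψ')] a o o' s s' ↔
      b = a ∧ o₁ = o ∧ o₂ = o' ∧ Form.sat M s ψ ∧ Form.sat M s' ψ' := by
  simp only [satList, or_false]

/-- The arrow update model `(0,p) →_a (0,⊤)`, with `⊤` written as `¬(p ∧ ¬p)`. -/
abbrev guardedArrow (a : A) (p : P) : List (Arrow P A) :=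
  [(a, 0, .atom p, 0, .neg (.and (.atom p) (.neg (.atom p))))]

theorem prodModel_guardedArrow_rel_iff (M : KModel P A) (a : A) (p : P) (x y : M.World × ℕ) :
    (prodModel M (guardedArrow a p)).R a x y ↔ M.R a x.1 y.1 ∧ x.2 = 0 ∧ y.2 = 0 ∧ M.V x.1 p := by
  simp only [prodModel, satList_singleton, sat_neg_and_neg_self, Form.sat, true_and, and_true,
    eq_comm (a := 0)]

section Bisimilar

variable {M : KModel P A} {E : AModel P A} {a : A} {p : P} {s : M.World} {e : E.Action}
  {h : Form.sat M s (E.pre e)}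

theorem exists_rel_sat_pre_of_bisimilar
    (hB : Bisimilar (prodModel M (guardedArrow a p)) (s, 0) (actProd M E) ⟨(s, e), h⟩)
    {t : M.World} (hst : M.R a s t) (hp : M.V s p) :
    ∃ t' e', M.R a s t' ∧ E.rel a e e' ∧ Form.sat M t' (E.pre e') := by
  obtain ⟨Z, hZ, hZs⟩ := hB
  have hedge : (prodModel M (guardedArrow a p)).R a (s, 0) (t, 0) :=
    (prodModel_guardedArrow_rel_iff M a p _ _).2 ⟨hst, rfl, rfl, hp⟩
  obtain ⟨⟨⟨t', e'⟩, hpre⟩, ⟨hst', hee'⟩, -⟩ := (hZ _ _ hZs).2.1 a _ hedge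
  exact ⟨t', e', hst', hee', hpre⟩

theorem not_sat_pre_of_bisimilar
    (hB : Bisimilar (prodModel M (guardedArrow a p)) (s, 0) (actProd M E) ⟨(s, e), h⟩)
    (hp : ¬ M.V s p) {t : M.World} {e' : E.Action} (hst : M.R a s t) (hee' : E.rel a e e') :
    ¬ Form.sat M t (E.pre e') := by
  intro hpre
  obtain ⟨Z, hZ, hZs⟩ := hB
  obtain ⟨y, hy, -⟩ := (hZ _ _ hZs).2.2 a ⟨(t, e'), hpre⟩ ⟨hst, hee'⟩
  exact hp ((prodModel_guardedArrow_rel_iff M a p _ y).1 hy).2.2.2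

end Bisimilar

def sinkModel (P A : Type) : KModel P A :=
  ⟨Bool, fun _ _ t => t = true, fun w _ => w = true⟩

/-- single-pointed arrow update models are strictly more update
expressive than single-pointed action models: for the arrow update model `U` with
single outcome `0` and single arrow `(0,p)→_a(0,⊤)`, there is no single-pointed
(finite) action model `(E,e)` such that for every pointed relational model `(M,s)`,
`(M*U,(s,0))` is bisimilar to `(M⊗E,(s,e))`. -/
theorem no_matching_action_model (P A : Type) (p : P) (a : A) :
    ¬ ∃ (E : AModel P A) (e : E.Action), Finite E.Action ∧
      ∀ (M : KModel P A) (s : M.World),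
        ∃ h : Form.sat M s (E.pre e),
          Bisimilar
            (prodModel M [(a, 0, Form.atom p, 0,
              Form.neg (Form.and (Form.atom p) (Form.neg (Form.atom p))))]) (s, 0)
            (actProd M E) ⟨(s, e), h⟩ := by
  rintro ⟨E, e, -, H⟩
  obtain ⟨_, hB_true⟩ := H (sinkModel P A) true
  obtain ⟨t, e', ht, hee', hpre⟩ :=
    exists_rel_sat_pre_of_bisimilar (M := sinkModel P A) hB_true (t := true) rfl rfl
  obtain ⟨_, hB_false⟩ := H (sinkModel P A) false
  exact not_sat_pre_of_bisimilar (M := sinkModel P A) hB_false Bool.false_ne_true ht hee' hpre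

end AAUML
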